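/- arXiv:2401.00270 — 4 statements merged into one kernel-verified Lean document; each statement's English description precedes it below -/
import Mathlib

section
/- Let χ be the non-principal Dirichlet character modulo 4 and L(s, χ) = ∑_{n≥1} χ(n) n^{-s}, and for Re(s) > 1 let F(s) = ∏_{q prime, q ≡ 3 (mod 4)} (1 − q^{-s})^{-1}. Then for every complex s with Re(s) > 1, (1 − 2^{-s})·ζ(s)/L(s, χ) = F(s)²/F(2s), where ζ is the Riemann zeta function. -/
/-!
Both sides are Euler products over the primes `q ≡ 3 (mod 4)` of `(1 + q^{-s}) / (1 - q^{-s})`.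
On the left, the Euler factors of `ζ` and `L(·, χ)` cancel at the primes `p ≡ 1 (mod 4)`,
`1 - 2^{-s}` cancels the factor of `ζ` at `2`, and at `q ≡ 3 (mod 4)` the quotient is
`(1 + q^{-s}) / (1 - q^{-s})` because `χ(q) = -1`. On the right, this is the factorisation
`1 - q^{-2s} = (1 - q^{-s}) (1 + q^{-s})`.
-/

/-- The non-principal Dirichlet character modulo 4, as a function on `ℕ`. -/
def chiFour (n : ℕ) : ℂ :=
  if n % 4 = 1 then 1 else if n % 4 = 3 then -1 else 0

open Complex

lemma Complex.tprod_one_sub_ne_zero {ι : Type*} {f : ι → ℂ} (hf : Summable f)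
    (h1 : ∀ i, f i ≠ 1) : ∏' i, (1 - f i) ≠ 0 := by
  simpa only [sub_eq_add_neg] using tprod_one_add_ne_zero_of_summable
    (fun i ↦ by rw [← sub_eq_add_neg]; exact sub_ne_zero.mpr (h1 i).symm) hf.neg.norm

lemma Complex.hasProd_inv_one_sub {ι : Type*} {f : ι → ℂ} (hf : Summable f)
    (h1 : ∀ i, f i ≠ 1) : HasProd (fun i ↦ (1 - f i)⁻¹) (∏' i, (1 - f i))⁻¹ := by
  have hmul : Multipliable fun i ↦ 1 - f i := by
    simpa only [sub_eq_add_neg] using Complex.multipliable_one_add_of_summable hf.neg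
  exact hmul.hasProd.inv₀ (tprod_one_sub_ne_zero hf h1)

lemma inv_one_sub_mul_self_div_inv_one_sub_sq {K : Type*} [Field K] {x : K} (hx : 1 - x ≠ 0) :
    (1 - x)⁻¹ * (1 - x)⁻¹ / (1 - x ^ 2)⁻¹ = (1 + x) / (1 - x) := by
  rw [div_inv_eq_mul, show 1 - x ^ 2 = (1 + x) * (1 - x) by ring]
  field_simp

lemma Nat.Prime.cpow_neg_ne_one {p : ℕ} (hp : p.Prime) {s : ℂ} (hs : 1 < s.re) :
    (p : ℂ) ^ (-s) ≠ 1 :=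
  fun h ↦ one_sub_prime_cpow_ne_zero hp hs (by rw [h, sub_self])

section EulerProductOverPrimes

variable {P : ℕ → Prop} {s : ℂ}

lemma summable_cpow_neg_subtype (hs : 1 < s.re) :
    Summable fun q : {q // P q} ↦ ((q : ℕ) : ℂ) ^ (-s) := by
  have h := Complex.summable_one_div_nat_cpow.mpr hs
  simp only [one_div, ← cpow_neg] at h
  exact h.subtype {q | P q}

lemma hasProd_tprod_inv_one_sub_cpow (hP : ∀ q, P q → q.Prime) (hs : 1 < s.re) :
    HasProd (fun q : {q // P q} ↦ (1 - ((q : ℕ) : ℂ) ^ (-s))⁻¹)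
      (∏' q : {q // P q}, (1 - ((q : ℕ) : ℂ) ^ (-s))⁻¹) :=
  (hasProd_inv_one_sub (summable_cpow_neg_subtype hs)
    fun q ↦ (hP q q.2).cpow_neg_ne_one hs).multipliable.hasProd

lemma tprod_inv_one_sub_cpow_ne_zero (hP : ∀ q, P q → q.Prime) (hs : 1 < s.re) :
    ∏' q : {q // P q}, (1 - ((q : ℕ) : ℂ) ^ (-s))⁻¹ ≠ 0 := by
  have hf := summable_cpow_neg_subtype (P := P) hs
  have h1 (q : {q // P q}) : ((q : ℕ) : ℂ) ^ (-s) ≠ 1 := (hP q q.2).cpow_neg_ne_one hs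
  rw [(hasProd_inv_one_sub hf h1).tprod_eq]
  exact inv_ne_zero (tprod_one_sub_ne_zero hf h1)

lemma hasProd_one_add_div_one_sub_cpow (hP : ∀ q, P q → q.Prime) (hs : 1 < s.re) :
    HasProd (fun q : {q // P q} ↦ (1 + ((q : ℕ) : ℂ) ^ (-s)) / (1 - ((q : ℕ) : ℂ) ^ (-s)))
      ((∏' q : {q // P q}, (1 - ((q : ℕ) : ℂ) ^ (-s))⁻¹) ^ 2 /
        ∏' q : {q // P q}, (1 - ((q : ℕ) : ℂ) ^ (-(2 * s)))⁻¹) := by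
  have hs2 : 1 < (2 * s).re := by simp only [mul_re, re_ofNat, im_ofNat]; linarith
  have hF := hasProd_tprod_inv_one_sub_cpow hP hs
  rw [sq]
  refine ((hF.mul hF).div₀ (hasProd_tprod_inv_one_sub_cpow hP hs2)
    (tprod_inv_one_sub_cpow_ne_zero hP hs2)).congr_fun fun q ↦ ?_
  have hsq : ((q : ℕ) : ℂ) ^ (-(2 * s)) = (((q : ℕ) : ℂ) ^ (-s)) ^ 2 := by
    rw [← cpow_nat_mul]; ring_nf
  rw [hsq, inv_one_sub_mul_self_div_inv_one_sub_sq (one_sub_prime_cpow_ne_zero (hP q q.2) hs)]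

end EulerProductOverPrimes

lemma hasProd_subtype_prime_of_hasProd_ite {M : Type*} [CommMonoid M] [TopologicalSpace M]
    {P : ℕ → Prop} [DecidablePred P] {g : ℕ → M} {a : M}
    (h : HasProd (fun p : Nat.Primes ↦ if P p then g p else 1) a) :
    HasProd (fun q : {q // q.Prime ∧ P q} ↦ g q) a := by
  let e : {q // q.Prime ∧ P q} → Nat.Primes := fun q ↦ ⟨q, q.2.1⟩
  have he : Function.Injective e := fun a b hab ↦
    Subtype.ext (congrArg (Subtype.val : Nat.Primes → ℕ) hab)
  rw [← he.hasProd_iff fun p hp ↦ if_neg fun hPp ↦ hp ⟨⟨p, p.2, hPp⟩, rfl⟩] at h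
  exact h.congr_fun fun q ↦ (if_pos q.2.2).symm

noncomputable def chiFourChar : DirichletCharacter ℂ 4 :=
  ZMod.χ₄.ringHomComp (Int.castRingHom ℂ)

lemma chiFourChar_natCast (n : ℕ) : chiFourChar n = chiFour n := by
  rw [chiFourChar, MulChar.ringHomComp_apply, ZMod.χ₄_nat_mod_four, chiFour]
  have := Nat.mod_lt n (by norm_num : 4 > 0)
  interval_cases n % 4 <;> simp

lemma LSeries_chiFourChar (s : ℂ) :
    LSeries (fun n ↦ chiFourChar n) s = ∑' n : ℕ, chiFour n / (n : ℂ) ^ s := by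
  refine tsum_congr fun n ↦ ?_
  rcases eq_or_ne n 0 with rfl | hn
  · simp [chiFour]
  · rw [LSeries.term_of_ne_zero hn, chiFourChar_natCast]

lemma chiFourChar_eulerFactor_ratio {p : ℕ} (hp : p.Prime) {s : ℂ} (hs : 1 < s.re) :
    (if p = 2 then 1 - (2 : ℂ) ^ (-s) else 1) *
        ((1 - (p : ℂ) ^ (-s))⁻¹ / (1 - chiFourChar p * (p : ℂ) ^ (-s))⁻¹) =
      if p % 4 = 3 then (1 + (p : ℂ) ^ (-s)) / (1 - (p : ℂ) ^ (-s)) else 1 := by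
  have hne := one_sub_prime_cpow_ne_zero hp hs
  rw [chiFourChar_natCast, div_inv_eq_mul]
  rcases hp.eq_two_or_odd with rfl | hodd
  · norm_num [chiFour] at hne ⊢
    exact mul_inv_cancel₀ hne
  · have h2 : p ≠ 2 := by omega
    rcases (by omega : p % 4 = 1 ∨ p % 4 = 3) with h1 | h3
    · simp [chiFour, h1, h2, inv_mul_cancel₀ hne]
    · simp only [h2, h3, chiFour, ↓reduceIte, OfNat.ofNat_ne_one, neg_mul, one_mul,
        sub_neg_eq_add]
      ring

lemma hasProd_one_sub_two_cpow_mul_riemannZeta_div_LSeries {s : ℂ} (hs : 1 < s.re) :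
    HasProd (fun p : Nat.Primes ↦
        if (p : ℕ) % 4 = 3 then (1 + (p : ℂ) ^ (-s)) / (1 - (p : ℂ) ^ (-s)) else 1)
      ((1 - 2 ^ (-s)) * riemannZeta s / LSeries (fun n ↦ chiFourChar n) s) := by
  have hL := chiFourChar.LSeries_eulerProduct_hasProd hs
  have h := (hasProd_ite_eq (⟨2, Nat.prime_two⟩ : Nat.Primes) (1 - (2 : ℂ) ^ (-s))).mul
    ((riemannZeta_eulerProduct_hasProd hs).div₀ hL (chiFourChar.LSeries_ne_zero_of_one_lt_re hs))
  rw [← mul_div_assoc] at h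
  refine h.congr_fun fun p ↦ ?_
  rw [← chiFourChar_eulerFactor_ratio p.2 hs]
  simp [Subtype.ext_iff]

/-- For `Re(s) > 1`, `(1 - 2^{-s})·ζ(s)/L(s,χ) = F(s)²/F(2s)`, where `F` is the
Euler product over the primes `q ≡ 3 (mod 4)`. -/
theorem zeta_over_L_eq_F_squared_div_F_two_s (s : ℂ) (hs : 1 < s.re) :
    (1 - 2 ^ (-s)) * riemannZeta s / (∑' n : ℕ, chiFour n / (n : ℂ) ^ s) =
      (∏' q : {q : ℕ // q.Prime ∧ q % 4 = 3}, (1 - ((q : ℕ) : ℂ) ^ (-s))⁻¹) ^ 2 /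
        ∏' q : {q : ℕ // q.Prime ∧ q % 4 = 3}, (1 - ((q : ℕ) : ℂ) ^ (-(2 * s)))⁻¹ := by
  rw [← LSeries_chiFourChar]
  have hLHS := hasProd_subtype_prime_of_hasProd_ite (P := (· % 4 = 3))
    (g := fun n : ℕ ↦ (1 + (n : ℂ) ^ (-s)) / (1 - (n : ℂ) ^ (-s)))
    (hasProd_one_sub_two_cpow_mul_riemannZeta_div_LSeries hs)
  have hRHS := hasProd_one_add_div_one_sub_cpow (P := fun q ↦ q.Prime ∧ q % 4 = 3)
    (fun _ hq ↦ hq.1) hs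
  exact hLHS.unique hRHS
end

section
/- For Re(s) > 1 let F(s) = ∏_{q prime, q ≡ 3 (mod 4)} (1 − q^{-s})^{-1}. Then (s − 1)·F(s)² tends to 2·F(2)/π as s → 1 with Re(s) > 1, where F(2) = ∏_{q prime, q ≡ 3 (mod 4)} (1 − q^{-2})^{-1}. In particular F(s)² has a simple pole at s = 1 with limiting residue 2F(2)/π. -/
/-!
Let `g` be the completely multiplicative indicator of the integers all of whose prime factors
are `≡ 3 (mod 4)`, so that `F(s) = L(g, s)` by its Euler product. Comparing Euler factors prime by
prime gives `ζ(s) (1 - 2^{-s}) F(2s) = F(s)² L(χ₄, s)` for `Re s > 1`. As `s → 1`,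
`(s - 1) ζ(s) → 1`, `1 - 2^{-s} → 1/2`, `F(2s) → F(2)` since `L(g, ·)` is holomorphic on
`Re s > 1`, and `L(χ₄, s) → π/4` by dominated convergence applied to the series
`∑ₖ ((4k+1)^{-s} - (4k+3)^{-s})`, whose value at `s = 1` is Leibniz's series.
-/

open Complex Filter Topology LSeries
open scoped LSeries.notation

noncomputable def LSeriesSummandHom (f : ℕ →*₀ ℂ) (s : ℂ) : ℕ →*₀ ℂ where
  toFun n := f n * (n : ℂ) ^ (-s)
  map_zero' := by simp
  map_one' := by simp
  map_mul' m n := by simp only [map_mul, Nat.cast_mul, natCast_mul_natCast_cpow]; ring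

theorem LSeries_eulerProduct_hasProd (f : ℕ →*₀ ℂ) {s : ℂ}
    (hs : LSeriesSummable (f ·) s) :
    HasProd (fun p : Nat.Primes ↦ (1 - f p * (p : ℂ) ^ (-s))⁻¹) (L (f ·) s) := by
  have hterm (n : ℕ) : LSeriesSummandHom f s n = term (f ·) s n :=
    (term_def₀ (map_zero f) s n).symm
  have h := EulerProduct.eulerProduct_completely_multiplicative_hasProd
    (f := LSeriesSummandHom f s) (by simpa only [hterm] using hs.norm)
  rwa [tsum_congr hterm] at h

def primeFactorsIndicator (P : ℕ → Prop) [DecidablePred P] : ℕ →*₀ ℂ where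
  toFun n := if n ≠ 0 ∧ ∀ p ∈ n.primeFactors, P p then 1 else 0
  map_zero' := by simp
  map_one' := by simp
  map_mul' m n := by
    rcases eq_or_ne m 0 with rfl | hm
    · simp
    rcases eq_or_ne n 0 with rfl | hn
    · simp
    simp only [ne_eq, mul_eq_zero, hm, hn, or_self, not_false_eq_true, true_and,
      Nat.primeFactors_mul hm hn, Finset.forall_mem_union, ite_zero_mul_ite_zero, mul_one]

section primeFactorsIndicator

variable {P : ℕ → Prop} [DecidablePred P]

lemma primeFactorsIndicator_prime {p : ℕ} (hp : p.Prime) :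
    primeFactorsIndicator P p = if P p then 1 else 0 := by
  simp [primeFactorsIndicator, hp.ne_zero, hp.primeFactors]

lemma abscissaOfAbsConv_primeFactorsIndicator_le :
    abscissaOfAbsConv (primeFactorsIndicator P ·) ≤ 1 :=
  abscissaOfAbsConv_le_of_le_const ⟨1, fun n _ ↦ by
    simp only [primeFactorsIndicator, MonoidWithZeroHom.coe_mk, ZeroHom.coe_mk]
    split_ifs <;> simp⟩

lemma LSeriesSummable_primeFactorsIndicator {s : ℂ} (hs : 1 < s.re) :
    LSeriesSummable (primeFactorsIndicator P ·) s :=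
  LSeriesSummable_of_abscissaOfAbsConv_lt_re <|
    abscissaOfAbsConv_primeFactorsIndicator_le.trans_lt (mod_cast hs)

lemma continuousAt_LSeries_primeFactorsIndicator {w : ℂ} (hw : 1 < w.re) :
    ContinuousAt (L (primeFactorsIndicator P ·)) w :=
  (LSeries_analyticOnNhd _ w <| abscissaOfAbsConv_primeFactorsIndicator_le.trans_lt
    (mod_cast hw)).continuousAt

theorem hasProd_LSeries_primeFactorsIndicator {s : ℂ} (hs : 1 < s.re) :
    HasProd (fun q : {q : ℕ // q.Prime ∧ P q} ↦ (1 - ((q : ℕ) : ℂ) ^ (-s))⁻¹)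
      (L (primeFactorsIndicator P ·) s) := by
  let e : {q : ℕ // q.Prime ∧ P q} → Nat.Primes := fun q ↦ ⟨q, q.2.1⟩
  have he : Function.Injective e :=
    fun _ _ h ↦ Subtype.ext (congrArg (fun p : Nat.Primes ↦ (p : ℕ)) h)
  refine (he.hasProd_iff fun p hp ↦ ?_).mpr
    (LSeries_eulerProduct_hasProd _ (LSeriesSummable_primeFactorsIndicator hs))
    |>.congr_fun fun q ↦ ?_
  · have : ¬ P p := fun h ↦ hp ⟨⟨p, p.2, h⟩, rfl⟩
    simp [primeFactorsIndicator_prime p.2, this]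
  · show _ = (1 - primeFactorsIndicator P q * _)⁻¹
    rw [primeFactorsIndicator_prime q.2.1, if_pos q.2.2, one_mul]

end primeFactorsIndicator

namespace DirichletCharacter

noncomputable def χ₄ : DirichletCharacter ℂ 4 := ZMod.χ₄.ringHomComp (Int.castRingHom ℂ)

lemma χ₄_natCast (n : ℕ) :
    χ₄ n = if n % 2 = 0 then 0 else if n % 4 = 1 then 1 else -1 := by
  rw [χ₄, MulChar.ringHomComp_apply, ZMod.χ₄_nat_eq_if_mod_four]
  split_ifs <;> simp

end DirichletCharacter

open DirichletCharacter

lemma norm_natCast_cpow_neg_lt_one {n : ℕ} (hn : 1 < n) {s : ℂ} (hs : 0 < s.re) :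
    ‖(n : ℂ) ^ (-s)‖ < 1 := by
  rw [norm_natCast_cpow_of_pos (by omega), neg_re]
  exact Real.rpow_lt_one_of_one_lt_of_neg (mod_cast hn) (neg_neg_of_pos hs)

lemma eulerFactor_mod_four_identity {p : ℕ} (hp : p.Prime) {x : ℂ} (hx : x ≠ 1) :
    (1 - x)⁻¹ * (if p = 2 then 1 - x else 1) *
        (1 - primeFactorsIndicator (· % 4 = 3) p * x ^ 2)⁻¹ =
      (1 - primeFactorsIndicator (· % 4 = 3) p * x)⁻¹ ^ 2 * (1 - χ₄ p * x)⁻¹ := by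
  rw [primeFactorsIndicator_prime hp, χ₄_natCast]
  rcases hp.eq_two_or_odd with rfl | hodd
  · simp [inv_mul_cancel₀ (sub_ne_zero.mpr hx.symm)]
  · have h2 : p ≠ 2 := by omega
    rcases Nat.odd_mod_four_iff.mp hodd with h1 | h3
    · simp [h1, h2, hodd]
    · simp only [h2, h3, hodd, ↓reduceIte, mul_one, one_mul, one_ne_zero,
        OfNat.ofNat_ne_one, neg_mul, sub_neg_eq_add]
      rw [show (1 : ℂ) - x ^ 2 = (1 - x) * (1 + x) by ring, mul_inv]
      ring

theorem riemannZeta_mul_LSeries_eq_sq_mul_LSeries_χ₄ {s : ℂ} (hs : 1 < s.re) :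
    riemannZeta s * (1 - 2 ^ (-s)) * L (primeFactorsIndicator (· % 4 = 3) ·) (2 * s) =
      L (primeFactorsIndicator (· % 4 = 3) ·) s ^ 2 * L ↗χ₄ s := by
  have h2s : 1 < (2 * s).re := by
    simp only [mul_re, re_ofNat, im_ofNat, zero_mul, sub_zero]; linarith
  have hζ := riemannZeta_eulerProduct_hasProd hs
  have h2 : HasProd (fun p : Nat.Primes ↦ if (p : ℕ) = 2 then 1 - (p : ℂ) ^ (-s) else 1)
      (1 - 2 ^ (-s)) := by
    simpa using hasProd_single (⟨2, Nat.prime_two⟩ : Nat.Primes)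
      (f := fun p : Nat.Primes ↦ if (p : ℕ) = 2 then 1 - (p : ℂ) ^ (-s) else 1)
      fun p hp ↦ if_neg fun h ↦ hp (Subtype.ext h)
  have hg (w : ℂ) (hw : 1 < w.re) :=
    LSeries_eulerProduct_hasProd _ (LSeriesSummable_primeFactorsIndicator (P := (· % 4 = 3)) hw)
  refine ((hζ.mul h2).mul (hg _ h2s)).unique ?_
  convert! ((hg s hs).mul (hg s hs)).mul (χ₄.LSeries_eulerProduct_hasProd hs) using 1
  · ext p
    have hx : (p : ℂ) ^ (-s) ≠ 1 := ne_of_apply_ne norm <| by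
      rw [norm_one]; exact (norm_natCast_cpow_neg_lt_one p.2.one_lt (by linarith)).ne
    rw [show -(2 * s) = (2 : ℕ) * -s by push_cast; ring, cpow_nat_mul]
    simpa only [Pi.mul_apply, sq] using eulerFactor_mod_four_identity p.2 hx
  · ring

lemma LSeries_χ₄_eq_tsum {s : ℂ} (hs : 1 < s.re) :
    L ↗χ₄ s =
      ∑' k : ℕ, (((4 * k + 1 : ℕ) : ℂ) ^ (-s) - ((4 * k + 3 : ℕ) : ℂ) ^ (-s)) := by
  have hsum : Summable fun n : ℕ ↦ (n : ℂ) ^ (-s) := by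
    simpa [cpow_neg] using Complex.summable_one_div_nat_cpow.mpr hs
  have hclass (j : ℕ) : Summable fun k : ℕ ↦ ((4 * k + j : ℕ) : ℂ) ^ (-s) :=
    hsum.comp_injective fun a b h ↦ by simpa using h
  have hperiodic (j m : ℕ) : χ₄ ((j + 4 * m : ℕ) : ZMod 4) = χ₄ (j : ZMod 4) := by
    simp [show (4 : ZMod 4) = 0 from rfl]
  have h0 : χ₄ 0 = 0 := by simpa using χ₄_natCast 0
  have h2 : χ₄ 2 = 0 := by simpa using χ₄_natCast 2
  have h3 : χ₄ 3 = -1 := by simpa using χ₄_natCast 3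
  rw [LSeries, Nat.sumByResidueClasses (χ₄.LSeriesSummable_of_one_lt_re hs) 4,
    (hclass 1).tsum_sub (hclass 3)]
  change ∑ j : Fin 4, _ = _
  simp only [Fin.sum_univ_four, ZMod.val, Fin.val_zero, Fin.val_one, Fin.val_two,
    term_def₀ (f := ↗χ₄) (by simpa using h0), hperiodic]
  norm_num [h0, h2, h3, tsum_neg, sub_eq_add_neg, add_comm]

theorem hasSum_leibniz_paired :
    HasSum (fun k : ℕ ↦ (4 * k + 1 : ℝ)⁻¹ - (4 * k + 3 : ℝ)⁻¹) (Real.pi / 4) := by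
  rw [hasSum_iff_tendsto_nat_of_nonneg fun k ↦
    sub_nonneg.mpr (inv_anti₀ (by positivity) (by linarith))]
  have hpair (n : ℕ) : ∑ i ∈ Finset.range (2 * n), (-1 : ℝ) ^ i / (2 * i + 1) =
      ∑ k ∈ Finset.range n, ((4 * k + 1 : ℝ)⁻¹ - (4 * k + 3 : ℝ)⁻¹) := by
    induction n with
    | zero => simp
    | succ n ih =>
      rw [mul_add, mul_one, Finset.sum_range_succ, Finset.sum_range_succ, Finset.sum_range_succ,
        ih, pow_succ, pow_mul]
      push_cast
      ring
  exact (Real.tendsto_sum_pi_div_four.comp (tendsto_id.const_mul_atTop' two_pos)).congr hpair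

lemma norm_ofReal_cpow_neg_sub_le {a b : ℝ} (ha : 0 < a) (hab : a ≤ b) {s : ℂ}
    (hs : 0 ≤ s.re) :
    ‖(a : ℂ) ^ (-s) - (b : ℂ) ^ (-s)‖ ≤ ‖s‖ * a ^ (-s.re - 1) * (b - a) := by
  have hderiv (x : ℝ) (hx : x ∈ Set.Icc a b) :
      HasDerivWithinAt (fun y : ℝ ↦ (y : ℂ) ^ (-s)) (-s * (x : ℂ) ^ (-s - 1))
        (Set.Icc a b) x := by
    have hx₀ : 0 < x := ha.trans_le hx.1
    simpa using ((hasDerivAt_id (x : ℂ)).cpow_const (c := -s)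
      (ofReal_mem_slitPlane.mpr hx₀)).comp_ofReal.hasDerivWithinAt
  have hbound (x : ℝ) (hx : x ∈ Set.Icc a b) :
      ‖-s * (x : ℂ) ^ (-s - 1)‖ ≤ ‖s‖ * a ^ (-s.re - 1) := by
    rw [norm_mul, norm_neg, norm_cpow_eq_rpow_re_of_pos (ha.trans_le hx.1)]
    gcongr
    exact Real.rpow_le_rpow_of_nonpos ha hx.1 (by simp only [sub_re, neg_re, one_re]; linarith)
  rw [norm_sub_rev]
  simpa [abs_of_nonneg (sub_nonneg.mpr hab)] using
    (convex_Icc a b).norm_image_sub_le_of_norm_hasDerivWithin_le hderiv hbound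
      (Set.left_mem_Icc.mpr hab) (Set.right_mem_Icc.mpr hab)

theorem tendsto_LSeries_χ₄ :
    Tendsto (L ↗χ₄) (𝓝[{s | 1 < s.re}] 1) (𝓝 (Real.pi / 4)) := by
  have hlim : (Real.pi / 4 : ℂ) = ∑' k : ℕ,
      (((4 * k + 1 : ℕ) : ℂ) ^ (-1 : ℂ) - ((4 * k + 3 : ℕ) : ℂ) ^ (-1 : ℂ)) := by
    have := congrArg ofReal hasSum_leibniz_paired.tsum_eq
    rw [ofReal_tsum] at this
    push_cast at this ⊢
    simp [← this, cpow_neg_one]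
  have hcont (n : ℕ) :
      Continuous fun s : ℂ ↦
        ((4 * n + 1 : ℕ) : ℂ) ^ (-s) - ((4 * n + 3 : ℕ) : ℂ) ^ (-s) :=
    (continuous_neg.const_cpow (Or.inl (Nat.cast_ne_zero.mpr (by omega)))).sub
      (continuous_neg.const_cpow (Or.inl (Nat.cast_ne_zero.mpr (by omega))))
  have hnorm : ∀ᶠ s in 𝓝[{s | 1 < s.re}] (1 : ℂ), ‖s‖ < 2 :=
    nhdsWithin_le_nhds <| (continuous_norm.tendsto (1 : ℂ)).eventually_lt_const (by simp)
  have hbound : Summable fun k : ℕ ↦ 2 * ((4 * k + 1 : ℕ) : ℝ) ^ (-2 : ℝ) * 2 :=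
    ((Real.summable_nat_rpow.mpr (by norm_num)).comp_injective fun a b h ↦ by simpa using h)
      |>.mul_left 2 |>.mul_right 2
  rw [hlim]
  refine (tendsto_tsum_of_dominated_convergence hbound
    (fun k ↦ ((hcont k).tendsto 1).mono_left nhdsWithin_le_nhds) ?_).congr' ?_
  · filter_upwards [hnorm, self_mem_nhdsWithin] with s hs₂ (hs₁ : 1 < s.re) k
    have h := norm_ofReal_cpow_neg_sub_le (a := (4 * k + 1 : ℕ)) (b := (4 * k + 3 : ℕ))
      (by positivity) (by gcongr; norm_num) (s := s) (by linarith)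
    rw [show ((4 * k + 3 : ℕ) : ℝ) - (4 * k + 1 : ℕ) = 2 by push_cast; ring] at h
    simp only [ofReal_natCast] at h
    refine h.trans ?_
    gcongr
    · exact_mod_cast Nat.le_add_left 1 (4 * k)
    · linarith
  · filter_upwards [self_mem_nhdsWithin] with s (hs : 1 < s.re)
    exact (LSeries_χ₄_eq_tsum hs).symm

/-- `(s-1)·F(s)² → 2·F(2)/π` as `s → 1` within `Re(s) > 1`, where `F` is the
Euler product over the primes `q ≡ 3 (mod 4)`. Thus `F(s)²` has a simple pole at
`s = 1` with limiting residue `2F(2)/π`. -/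
theorem F_squared_simple_pole :
    Filter.Tendsto
      (fun s : ℂ =>
        (s - 1) * (∏' q : {q : ℕ // q.Prime ∧ q % 4 = 3},
          (1 - ((q : ℕ) : ℂ) ^ (-s))⁻¹) ^ 2)
      (nhdsWithin 1 {s : ℂ | 1 < s.re})
      (nhds (2 * (∏' q : {q : ℕ // q.Prime ∧ q % 4 = 3},
        (1 - ((q : ℕ) : ℂ) ^ (-(2 : ℂ)))⁻¹) / (Real.pi : ℂ))) := by
  have hF (s : ℂ) (hs : 1 < s.re) :=
    (hasProd_LSeries_primeFactorsIndicator (P := (· % 4 = 3)) hs).tprod_eq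
  have hζ : Tendsto (fun s ↦ (s - 1) * riemannZeta s) (𝓝[{s | 1 < s.re}] 1) (𝓝 1) :=
    riemannZeta_residue_one.mono_left <| nhdsWithin_mono _ fun s (hs : 1 < s.re) ↦
      Set.mem_compl_singleton_iff.mpr (by rintro rfl; simp at hs)
  have h2 : Tendsto (fun s : ℂ ↦ 1 - (2 : ℂ) ^ (-s)) (𝓝[{s | 1 < s.re}] 1)
      (𝓝 (1 - (2 : ℂ) ^ (-1 : ℂ))) :=
    ((continuous_const.sub (continuous_neg.const_cpow (Or.inl two_ne_zero))).tendsto 1).mono_left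
      nhdsWithin_le_nhds
  have hF2 : Tendsto (fun s : ℂ ↦ L (primeFactorsIndicator (· % 4 = 3) ·) (2 * s))
      (𝓝[{s | 1 < s.re}] 1) (𝓝 (L (primeFactorsIndicator (· % 4 = 3) ·) 2)) := by
    refine ((continuousAt_LSeries_primeFactorsIndicator (by norm_num)).tendsto.comp ?_).mono_left
      nhdsWithin_le_nhds
    simpa using (continuous_const_mul (2 : ℂ)).tendsto 1
  have hπ : (Real.pi / 4 : ℂ) ≠ 0 := by simp [Real.pi_ne_zero]
  rw [hF 2 (by norm_num)]
  convert ((hζ.mul h2).mul hF2).div tendsto_LSeries_χ₄ hπ |>.congr' ?_ using 2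
  · rw [cpow_neg_one]
    field_simp
    ring
  · filter_upwards [self_mem_nhdsWithin] with s (hs : 1 < s.re)
    rw [Pi.div_apply, hF s hs, mul_assoc (s - 1), mul_assoc (s - 1),
      riemannZeta_mul_LSeries_eq_sq_mul_LSeries_χ₄ hs,
      div_eq_iff (χ₄.LSeries_ne_zero_of_one_lt_re hs)]
    ring
end

section
/- F(2) = π²/8 − ∑_{n} h_n/n², where F(2) = ∏_{q prime, q ≡ 3 (mod 4)} (1 − q^{-2})^{-1} and h_n = 1 if n is an odd positive integer that is not a 𝒫-integer and h_n = 0 otherwise; the series on the right converges. -/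
/-- `n` is a `𝒫`-integer: a positive integer all of whose prime factors are
congruent to `3` mod `4`. -/
def IsPInteger (n : ℕ) : Prop :=
  0 < n ∧ ∀ q : ℕ, q.Prime → q ∣ n → q % 4 = 3

open scoped Classical in
/-- `h_n`: the indicator of the odd non-`𝒫`-integers. -/
noncomputable def hCoef (n : ℕ) : ℝ := if Odd n ∧ ¬ IsPInteger n then 1 else 0

open scoped Classical

/-- The function `n ↦ [n is a 𝒫-integer] / n²`. -/
noncomputable def fPfun (n : ℕ) : ℝ := if IsPInteger n then ((n : ℝ) ^ 2)⁻¹ else 0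

lemma isPInteger_one : IsPInteger 1 :=
  ⟨one_pos, fun q hq hq1 => (hq.one_lt.ne' (Nat.dvd_one.mp hq1)).elim⟩

lemma not_isPInteger_zero : ¬ IsPInteger 0 := by
  rintro ⟨h, -⟩; exact lt_irrefl 0 h

lemma isPInteger_mul_iff {m n : ℕ} (hm : m ≠ 0) (hn : n ≠ 0) :
    IsPInteger (m * n) ↔ IsPInteger m ∧ IsPInteger n := by
  constructor
  · rintro ⟨-, h⟩
    exact ⟨⟨Nat.pos_of_ne_zero hm, fun q hq hd => h q hq (hd.mul_right n)⟩,
      ⟨Nat.pos_of_ne_zero hn, fun q hq hd => h q hq (hd.mul_left m)⟩⟩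
  · rintro ⟨⟨-, h1⟩, ⟨-, h2⟩⟩
    refine ⟨Nat.mul_pos (Nat.pos_of_ne_zero hm) (Nat.pos_of_ne_zero hn), fun q hq hd => ?_⟩
    rcases (Nat.Prime.dvd_mul hq).mp hd with h | h
    · exact h1 q hq h
    · exact h2 q hq h

lemma fPfun_one : fPfun 1 = 1 := by
  unfold fPfun; rw [if_pos isPInteger_one]; norm_num

lemma fPfun_mul (m n : ℕ) : fPfun (m * n) = fPfun m * fPfun n := by
  unfold fPfun
  rcases eq_or_ne m 0 with rfl | hm
  · simp [not_isPInteger_zero]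
  rcases eq_or_ne n 0 with rfl | hn
  · simp [not_isPInteger_zero]
  rw [show (IsPInteger (m * n)) = (IsPInteger m ∧ IsPInteger n) from
    propext (isPInteger_mul_iff hm hn)]
  by_cases h1 : IsPInteger m <;> by_cases h2 : IsPInteger n <;>
    simp [h1, h2, mul_pow, mul_inv, mul_comm]

/-- The completely multiplicative function `n ↦ [n is a 𝒫-integer] / n²`, bundled. -/
noncomputable def fP : ℕ →*₀ ℝ where
  toFun := fPfun
  map_zero' := if_neg not_isPInteger_zero
  map_one' := fPfun_one
  map_mul' := fPfun_mul

lemma fP_apply (n : ℕ) : fP n = fPfun n := rfl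

lemma fP_le (n : ℕ) : ‖fP n‖ ≤ 1 / (n : ℝ) ^ 2 := by
  rw [fP_apply]
  unfold fPfun
  split
  · rw [Real.norm_eq_abs, abs_of_nonneg (by positivity), one_div]
  · rw [norm_zero]; positivity

lemma summable_norm_fP : Summable (fun n => ‖fP n‖) :=
  Summable.of_nonneg_of_le (fun _ => norm_nonneg _) fP_le hasSum_zeta_two.summable

lemma isPInteger_prime_iff {p : ℕ} (hp : p.Prime) : IsPInteger p ↔ p % 4 = 3 := by
  constructor
  · rintro ⟨-, h⟩; exact h p hp dvd_rfl
  · intro h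
    refine ⟨hp.pos, fun q hq hd => ?_⟩
    rwa [(Nat.prime_dvd_prime_iff_eq hq hp).mp hd]

lemma hasSum_odd_inv_sq :
    HasSum (fun n : ℕ => if Odd n then ((n : ℝ) ^ 2)⁻¹ else 0) (Real.pi ^ 2 / 8) := by
  have htot : HasSum (fun n : ℕ => ((n : ℝ) ^ 2)⁻¹) (Real.pi ^ 2 / 6) := by
    simpa [one_div] using hasSum_zeta_two
  have heven2 : HasSum (fun k : ℕ => (((2 * k : ℕ) : ℝ) ^ 2)⁻¹) (Real.pi ^ 2 / 24) := by
    have hfe : (fun k : ℕ => (((2 * k : ℕ) : ℝ) ^ 2)⁻¹) =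
        fun k : ℕ => 4⁻¹ * ((k : ℝ) ^ 2)⁻¹ := by
      funext k
      push_cast
      rw [mul_pow, mul_inv]
      norm_num
    have he : Real.pi ^ 2 / 24 = 4⁻¹ * (Real.pi ^ 2 / 6) := by ring
    rw [hfe, he]
    exact htot.mul_left _
  have hinj : Function.Injective (fun k : ℕ => 2 * k) :=
    fun a b h => Nat.eq_of_mul_eq_mul_left two_pos h
  have heven : HasSum (fun n : ℕ => if Even n then ((n : ℝ) ^ 2)⁻¹ else 0)
      (Real.pi ^ 2 / 24) := by
    rw [← hinj.hasSum_iff ?_]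
    · refine heven2.congr_fun fun k => ?_
      show (if Even (2 * k) then (((2 * k : ℕ) : ℝ) ^ 2)⁻¹ else 0) = _
      rw [if_pos (even_two_mul k)]
    · intro x hx
      rw [if_neg]
      intro hev
      refine hx ⟨x / 2, ?_⟩
      show 2 * (x / 2) = x
      obtain ⟨c, hc⟩ := hev
      omega
  have he8 : Real.pi ^ 2 / 8 = Real.pi ^ 2 / 6 - Real.pi ^ 2 / 24 := by ring
  rw [he8]
  refine (htot.sub heven).congr_fun fun n => ?_
  by_cases h : Odd n
  · simp [h, Nat.not_even_iff_odd.mpr h]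
  · simp [h, Nat.not_odd_iff_even.mp h]

/-- `F(2) = π²/8 − ∑ₙ hₙ/n²`, where the series converges. -/
theorem F_two_eq_pi_sq_div_eight_sub
    (F2 : ℝ)
    (hF2 : HasProd
      (fun q : {q : ℕ // q.Prime ∧ q % 4 = 3} => (1 - (((q : ℕ) : ℝ) ^ 2)⁻¹)⁻¹) F2) :
    Summable (fun n : ℕ => hCoef n / (n : ℝ) ^ 2) ∧
    F2 = Real.pi ^ 2 / 8 - ∑' n : ℕ, hCoef n / (n : ℝ) ^ 2 := by
  have hEuler : HasProd (fun p : Nat.Primes => (1 - fP (p : ℕ))⁻¹) (∑' n, fP n) :=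
    EulerProduct.eulerProduct_completely_multiplicative_hasProd summable_norm_fP
  -- transfer to the subtype of primes ≡ 3 mod 4
  set ι : {q : ℕ // q.Prime ∧ q % 4 = 3} → Nat.Primes := fun q => ⟨q.1, q.2.1⟩ with hι
  have hιinj : Function.Injective ι := fun a b h =>
    Subtype.ext (congrArg (fun p : Nat.Primes => (p : ℕ)) h)
  have hoff : ∀ p : Nat.Primes, p ∉ Set.range ι → (1 - fP (p : ℕ))⁻¹ = 1 := by
    rintro ⟨p, hp⟩ hnr
    have h4 : ¬ p % 4 = 3 := by
      intro h4
      exact hnr ⟨⟨p, hp, h4⟩, rfl⟩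
    have hz : fP p = 0 := by
      rw [fP_apply]
      exact if_neg (fun h => h4 ((isPInteger_prime_iff hp).mp h))
    simp [hz]
  have hcomp : (fun q : {q : ℕ // q.Prime ∧ q % 4 = 3} =>
      (1 - (((q : ℕ) : ℝ) ^ 2)⁻¹)⁻¹) = (fun p : Nat.Primes => (1 - fP (p : ℕ))⁻¹) ∘ ι := by
    funext q
    have hq : fP (q : ℕ) = (((q : ℕ) : ℝ) ^ 2)⁻¹ := by
      rw [fP_apply]
      exact if_pos ((isPInteger_prime_iff q.2.1).mpr q.2.2)
    simp [Function.comp, hι, hq]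
  have hF2' : HasProd (fun p : Nat.Primes => (1 - fP (p : ℕ))⁻¹) F2 := by
    rw [← hιinj.hasProd_iff hoff, ← hcomp]
    exact hF2
  have hF2val : F2 = ∑' n, fP n := hF2'.unique hEuler
  -- summability of the h-series
  have hnonneg : ∀ n : ℕ, 0 ≤ hCoef n / (n : ℝ) ^ 2 := by
    intro n
    unfold hCoef
    split
    · positivity
    · rw [zero_div]
  have hle : ∀ n : ℕ, hCoef n / (n : ℝ) ^ 2 ≤ 1 / (n : ℝ) ^ 2 := by
    intro n
    unfold hCoef
    split
    · exact le_rfl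
    · rw [zero_div]; positivity
  have hSumm : Summable (fun n : ℕ => hCoef n / (n : ℝ) ^ 2) :=
    Summable.of_nonneg_of_le hnonneg hle hasSum_zeta_two.summable
  refine ⟨hSumm, ?_⟩
  -- pointwise identity
  have hkey : ∀ n : ℕ, fP n + hCoef n / (n : ℝ) ^ 2 =
      (if Odd n then ((n : ℝ) ^ 2)⁻¹ else 0) := by
    intro n
    rw [fP_apply]
    unfold fPfun hCoef
    by_cases hodd : Odd n
    · by_cases hP : IsPInteger n
      · simp [hodd, hP]
      · rw [if_neg hP, if_pos ⟨hodd, hP⟩, if_pos hodd, zero_add, one_div]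
    · have hP : ¬ IsPInteger n := by
        rcases eq_or_ne n 0 with rfl | hn
        · exact not_isPInteger_zero
        · rintro ⟨-, h⟩
          have h2 : (2 : ℕ) ∣ n := (Nat.not_odd_iff_even.mp hodd).two_dvd
          have := h 2 Nat.prime_two h2
          omega
      simp [hodd, hP]
  have hfSum : HasSum (fun n => fP n) (∑' n, fP n) :=
    (summable_norm_fP.of_norm).hasSum
  have hhSum : HasSum (fun n : ℕ => hCoef n / (n : ℝ) ^ 2)
      (∑' n : ℕ, hCoef n / (n : ℝ) ^ 2) := hSumm.hasSum
  have hadd := hfSum.add hhSum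
  have hodds : HasSum (fun n : ℕ => if Odd n then ((n : ℝ) ^ 2)⁻¹ else 0)
      ((∑' n, fP n) + ∑' n : ℕ, hCoef n / (n : ℝ) ^ 2) :=
    hadd.congr_fun fun n => (hkey n).symm
  have hval := hodds.unique hasSum_odd_inv_sq
  rw [hF2val]
  linarith
end

section
/- Fix r ∈ {23, 47, 71, 83}, let f(t) = (84t + r)·(1008t + 12r − 1), and for a prime q let ω_f(q) be the number of roots of f in ℤ/qℤ; let ω(q) be the number of roots of t(t+2) in ℤ/qℤ (so ω(2) = 1 and ω(q) = 2 for odd primes q). Then for every real x ≥ 7, ∏_{q prime, q ≤ x} (1 − 1/q)^{-2}(1 − ω_f(q)/q) = (42/5) · ∏_{q prime, q ≤ x} (1 − 1/q)^{-2}(1 − ω(q)/q). -/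
/-!
Away from `2`, `3` and `7` both `f` and `t(t + 2)` are products of two linear factors with
invertible leading coefficients and distinct roots, so `ω_f(q) = ω(q) = 2` and the local factors
agree. At `q ∣ 84` the polynomial `f` reduces to the constant `r(12r − 1)`, a unit mod `q` for the
four admissible `r`, so `ω_f(q) = 0` there; comparing the six remaining factors gives
`(4 · 9/4 · 49/36) / (2 · 3/4 · 35/36) = 42/5`.
-/

/-- `ω_f(q)`: the number of roots of `f(t) = (84t + r)(1008t + 12r − 1)` in `ℤ/qℤ`. -/
noncomputable def omegaF (r q : ℕ) : ℕ :=
  Nat.card {t : ZMod q //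
    (84 * t + (r : ZMod q)) * (1008 * t + 12 * (r : ZMod q) - 1) = 0}

/-- `ω(q)`: the number of roots of `t(t + 2)` in `ℤ/qℤ`. -/
noncomputable def omegaTwin (q : ℕ) : ℕ :=
  Nat.card {t : ZMod q // t * (t + 2) = 0}

theorem Finset.prod_eq_mul_prod_of_eqOn_sdiff {ι M : Type*} [CommMonoid M] [DecidableEq ι]
    {s T : Finset ι} {f g : ι → M} {c : M} (hT : T ⊆ s) (hfg : ∀ i ∈ s \ T, f i = g i)
    (hc : ∏ i ∈ T, f i = c * ∏ i ∈ T, g i) :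
    ∏ i ∈ s, f i = c * ∏ i ∈ s, g i := by
  rw [← prod_sdiff hT, ← prod_sdiff hT (f := g), prod_congr rfl hfg, hc, mul_left_comm]

theorem natCard_affine_mul_affine_eq_zero {K : Type*} [Field K] {a b c d : K}
    (ha : a ≠ 0) (hc : c ≠ 0) (hdet : a * d - b * c ≠ 0) :
    Nat.card {t : K // (a * t + b) * (c * t + d) = 0} = 2 := by
  have hroots : {t : K | (a * t + b) * (c * t + d) = 0} = {-b / a, -d / c} := by
    ext t
    simp only [Set.mem_ofPred_eq, Set.mem_insert_iff, Set.mem_singleton_iff, mul_eq_zero,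
      eq_div_iff ha, eq_div_iff hc]
    constructor <;> rintro (h | h)
    exacts [.inl (by linear_combination h), .inr (by linear_combination h),
      .inl (by linear_combination h), .inr (by linear_combination h)]
  have hne : -b / a ≠ -d / c := by
    rw [Ne, div_eq_div_iff ha hc]
    exact fun h => hdet (by linear_combination h)
  rw [← Set.ncard_pair hne, ← hroots, ← Nat.card_coe_set_eq]
  rfl

theorem omegaTwin_eq_two {q : ℕ} [Fact q.Prime] (hq : q ≠ 2) : omegaTwin q = 2 := by
  have h2 : (2 : ZMod q) ≠ 0 := Ring.two_ne_zero (by rwa [ZMod.ringChar_zmod_n])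
  rw [omegaTwin]
  simpa only [one_mul, add_zero, mul_one, zero_mul, sub_zero] using
    natCard_affine_mul_affine_eq_zero (a := (1 : ZMod q)) (b := 0) (c := 1) (d := 2)
      one_ne_zero one_ne_zero (by simpa using h2)

theorem omegaTwin_two : omegaTwin 2 = 1 := by
  rw [omegaTwin, Nat.card_eq_fintype_card]
  decide

theorem omegaF_eq_two (r : ℕ) {q : ℕ} [Fact q.Prime] (hq : ¬q ∣ 84) :
    omegaF r q = 2 := by
  have h84 : (84 : ZMod q) ≠ 0 := by exact_mod_cast (ZMod.natCast_eq_zero_iff 84 q).not.2 hq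
  have h12 : (12 : ZMod q) ≠ 0 := left_ne_zero_of_mul (a := 12) (b := 7) (by norm_num [h84])
  have h1008 : (1008 : ZMod q) ≠ 0 := by
    rw [show (1008 : ZMod q) = 12 * 84 by norm_num]
    exact mul_ne_zero h12 h84
  rw [omegaF]
  simpa only [add_sub_assoc] using
    natCard_affine_mul_affine_eq_zero h84 h1008 (b := (r : ZMod q)) (d := 12 * r - 1)
      fun h => h84 (by linear_combination -h)

theorem omegaF_eq_zero {r q : ℕ} (h84 : (84 : ZMod q) = 0)
    (hr : (r : ZMod q) * (12 * r - 1) ≠ 0) : omegaF r q = 0 := by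
  have h1008 : (1008 : ZMod q) = 0 := by
    rw [show (1008 : ZMod q) = 12 * 84 by norm_num, h84, mul_zero]
  rw [omegaF, Nat.card_eq_zero]
  exact .inl ⟨fun ⟨t, ht⟩ => hr (by simpa [h84, h1008] using ht)⟩

theorem omegaF_two_three_seven {r : ℕ} (hr : r = 23 ∨ r = 47 ∨ r = 71 ∨ r = 83) :
    omegaF r 2 = 0 ∧ omegaF r 3 = 0 ∧ omegaF r 7 = 0 := by
  rcases hr with rfl | rfl | rfl | rfl <;>
    exact ⟨omegaF_eq_zero (by decide) (by decide), omegaF_eq_zero (by decide) (by decide),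
      omegaF_eq_zero (by decide) (by decide)⟩

theorem Nat.Prime.eq_two_or_three_or_seven_of_dvd_84 {q : ℕ} (hq : q.Prime) (h : q ∣ 84) :
    q = 2 ∨ q = 3 ∨ q = 7 := by
  simpa using (Nat.mem_primeFactorsList (by norm_num)).2 ⟨hq, h⟩

/-- The partial Hardy–Littlewood products for `f₁(t) = 84t + r`,
`f₂(t) = 1008t + 12r − 1` and for the twin-prime polynomials differ exactly by
the factor `42/5`, for every `x ≥ 7`. -/
theorem hardy_littlewood_partial_products (r : ℕ)
    (hr : r = 23 ∨ r = 47 ∨ r = 71 ∨ r = 83) (x : ℝ) (hx : 7 ≤ x) :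
    (∏ q ∈ Nat.primesBelow (⌊x⌋₊ + 1),
        ((1 - (q : ℝ)⁻¹)⁻¹) ^ 2 * (1 - (omegaF r q : ℝ) / (q : ℝ))) =
      42 / 5 * ∏ q ∈ Nat.primesBelow (⌊x⌋₊ + 1),
        ((1 - (q : ℝ)⁻¹)⁻¹) ^ 2 * (1 - (omegaTwin q : ℝ) / (q : ℝ)) := by
  have h7 : 7 ≤ ⌊x⌋₊ := Nat.le_floor (by exact_mod_cast hx)
  refine Finset.prod_eq_mul_prod_of_eqOn_sdiff (T := {2, 3, 7}) ?_ ?_ ?_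
  · intro q hq
    simp only [Finset.mem_insert, Finset.mem_singleton] at hq
    rcases hq with rfl | rfl | rfl <;> exact Nat.mem_primesBelow.2 ⟨by omega, by norm_num⟩
  · intro q hq
    obtain ⟨hqs, hqT⟩ := Finset.mem_sdiff.1 hq
    simp only [Finset.mem_insert, Finset.mem_singleton, not_or] at hqT
    have : Fact q.Prime := ⟨Nat.prime_of_mem_primesBelow hqs⟩
    have h84 : ¬q ∣ 84 := fun h => by
      rcases this.out.eq_two_or_three_or_seven_of_dvd_84 h with rfl | rfl | rfl <;> simp at hqT
    rw [omegaF_eq_two r h84, omegaTwin_eq_two hqT.1]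
  · obtain ⟨hf2, hf3, hf7⟩ := omegaF_two_three_seven hr
    have : Fact (Nat.Prime 7) := ⟨by norm_num⟩
    have ht3 : omegaTwin 3 = 2 := omegaTwin_eq_two (by norm_num)
    have ht7 : omegaTwin 7 = 2 := omegaTwin_eq_two (by norm_num)
    norm_num [hf2, hf3, hf7, omegaTwin_two, ht3, ht7]
end
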